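/- arXiv:1910.09817 — 5 statements merged into one kernel-verified Lean document; each statement's English description precedes it below -/
import Mathlib

section
/- Let x* ∈ ℝ^d. Then x* is a minimizer of F + G over ℝ^d if and only if the matrix 1_m (x*)ᵀ ∈ ℝ^{m×d} (all rows equal to x*) belongs to S_KKT; that is, if and only if there exists Y ∈ ℝ^{m×d} such that √C · (1_m (x*)ᵀ) = 0 and, for each i = 1,…,m, the i-th row v_i of the matrix −(∇f(1_m (x*)ᵀ) + √C Y) is a subgradient of G at x*, i.e. G(u) ≥ G(x*) + ⟨v_i, u − x*⟩ for all u ∈ ℝ^d. -/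
open Matrix

/-- Squared Euclidean norm of a vector in ℝ^d. -/
noncomputable def vecNormSq {d : ℕ} (v : Fin d → ℝ) : ℝ := ∑ j, v j ^ 2

/-- The continuous linear map `u ↦ ⟨v, u⟩` on ℝ^d (used to state that `v` is a gradient). -/
noncomputable def dotCLM {d : ℕ} (v : Fin d → ℝ) : (Fin d → ℝ) →L[ℝ] ℝ :=
  LinearMap.toContinuousLinearMap
    (∑ j, v j • (LinearMap.proj j : (Fin d → ℝ) →ₗ[ℝ] ℝ))

/-- Squared Frobenius norm. -/
noncomputable def frobSq {m d : ℕ} (X : Matrix (Fin m) (Fin d) ℝ) : ℝ :=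
  ∑ i, ∑ j, X i j ^ 2

/-- Frobenius inner product `⟨X, Y⟩_F = trace(Xᵀ Y)`. -/
noncomputable def frobInner {m d : ℕ} (X Y : Matrix (Fin m) (Fin d) ℝ) : ℝ :=
  ∑ i, ∑ j, X i j * Y i j

/-- All ones vector `1_m`. -/
def onesV (m : ℕ) : Fin m → ℝ := fun _ => 1

/-- The consensus matrix `1_m xᵀ` (all rows equal to `x`). -/
def consMat (m : ℕ) {d : ℕ} (x : Fin d → ℝ) : Matrix (Fin m) (Fin d) ℝ :=
  Matrix.of fun _ j => x j

/-- The matrix `∇f(X)` whose `i`-th row is `∇f_i(x_i)`. -/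
noncomputable def gradMat {m d : ℕ} (gradf : Fin m → (Fin d → ℝ) → (Fin d → ℝ))
    (X : Matrix (Fin m) (Fin d) ℝ) : Matrix (Fin m) (Fin d) ℝ :=
  Matrix.of fun i j => gradf i (X i) j

/-- `v` is a subgradient of the extended-valued convex function `G` at `x`. -/
def IsSubgradAt {d : ℕ} (G : (Fin d → ℝ) → EReal) (v x : Fin d → ℝ) : Prop :=
  ∀ u : Fin d → ℝ, G x + (((∑ j, v j * (u j - x j)) : ℝ) : EReal) ≤ G u

/-- Convexity for an extended-real-valued function. -/
def ERealConvexOn {d : ℕ} (G : (Fin d → ℝ) → EReal) : Prop :=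
  ∀ x y : Fin d → ℝ, ∀ a b : ℝ, 0 ≤ a → 0 ≤ b → a + b = 1 →
    G (a • x + b • y) ≤ (a : EReal) * G x + (b : EReal) * G y

/-- `G` is proper: never `⊥` and finite somewhere. -/
def GProper {d : ℕ} (G : (Fin d → ℝ) → EReal) : Prop :=
  (∀ x, G x ≠ ⊥) ∧ (∃ x, G x ≠ ⊤)

/-- `g(X) = Σ_i G(x_i)`. -/
noncomputable def gSum {m d : ℕ} (G : (Fin d → ℝ) → EReal)
    (X : Matrix (Fin m) (Fin d) ℝ) : EReal :=
  ∑ i, G (X i)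

/-- Objective of the proximal subproblem `Y ↦ g(Y) + (1/(2γ))‖Y − Z‖²_F`. -/
noncomputable def proxObj {m d : ℕ} (G : (Fin d → ℝ) → EReal) (γ : ℝ)
    (Z Y : Matrix (Fin m) (Fin d) ℝ) : EReal :=
  gSum G Y + (((1 / (2 * γ) * frobSq (Y - Z)) : ℝ) : EReal)

/-- `P` is the unique minimizer of the proximal subproblem, i.e. `P = prox_{γ g}(Z)`. -/
def IsProx {m d : ℕ} (G : (Fin d → ℝ) → EReal) (γ : ℝ)
    (Z P : Matrix (Fin m) (Fin d) ℝ) : Prop :=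
  (∀ Y, proxObj G γ Z P ≤ proxObj G γ Z Y) ∧
  (∀ Y, (∀ Y', proxObj G γ Z Y ≤ proxObj G γ Z Y') → Y = P)

/-- Largest eigenvalue of a symmetric matrix, via the Rayleigh quotient. -/
noncomputable def lamMax {m : ℕ} (P : Matrix (Fin m) (Fin m) ℝ) : ℝ :=
  sSup {r : ℝ | ∃ z : Fin m → ℝ, vecNormSq z = 1 ∧ r = z ⬝ᵥ (P *ᵥ z)}

/-- Smallest eigenvalue of a symmetric matrix, via the Rayleigh quotient. -/
noncomputable def lamMin {m : ℕ} (P : Matrix (Fin m) (Fin m) ℝ) : ℝ :=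
  sInf {r : ℝ | ∃ z : Fin m → ℝ, vecNormSq z = 1 ∧ r = z ⬝ᵥ (P *ᵥ z)}

/-- Second-smallest eigenvalue `λ₂(C) = min{⟨z, Cz⟩ : ‖z‖ = 1, 1ᵀz = 0}`. -/
noncomputable def lam2 {m : ℕ} (C : Matrix (Fin m) (Fin m) ℝ) : ℝ :=
  sInf {r : ℝ | ∃ z : Fin m → ℝ, vecNormSq z = 1 ∧ (∑ i, z i) = 0 ∧ r = z ⬝ᵥ (C *ᵥ z)}

/-- Square root of a positive semidefinite matrix (the definition removed from Mathlib). -/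
noncomputable def Matrix.PosSemidef.sqrt {n : Type*} [Fintype n] [DecidableEq n]
    {A : Matrix n n ℝ} (hA : A.PosSemidef) : Matrix n n ℝ :=
  hA.1.eigenvectorUnitary * diagonal ((√·) ∘ hA.1.eigenvalues) *
    (star hA.1.eigenvectorUnitary : Matrix n n ℝ)

/-!
For convex differentiable `F` and convex `G`, `x*` minimizes `F + G` iff `-∇F(x*)` is a
subgradient of `G` at `x*`: one direction is the gradient inequality for `F`, the other
differentiates `t ↦ F(x* + t (u - x*))` at `0` and uses convexity of `G` along the segment.

Since `C 1 = 0` forces `√C 1 = 0`, the consensus matrix is killed by `√C` and the columns of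
`√C Y` sum to zero, so the rows of `-(∇f(1 x*ᵀ) + √C Y)` average to `-∇F(x*)`; an average of
subgradients is a subgradient. Conversely `√C` is symmetric with kernel `span 1`, so its range
is `1ᗮ`, and the matrix `1 ∇F(x*)ᵀ - ∇f(1 x*ᵀ)`, whose columns sum to zero, is some `√C Y`.
-/

namespace Matrix

variable {n k : Type*}

theorem consMat_row {m d : ℕ} (x : Fin d → ℝ) (i : Fin m) : consMat m x i = x :=
  rfl

theorem mul_consMat_eq_zero {m d : ℕ} {A : Matrix n (Fin m) ℝ} (h1 : A *ᵥ (fun _ => 1) = 0)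
    (x : Fin d → ℝ) : A * consMat m x = 0 := by
  ext i j
  simpa [consMat, mul_apply, mulVec, dotProduct, ← Finset.sum_mul] using
    congrArg (· * x j) (congrFun h1 i)

variable [Fintype n]

theorem IsHermitian.sum_mul_apply_eq_zero {A : Matrix n n ℝ} (hA : A.IsHermitian)
    (h1 : A *ᵥ (fun _ => 1) = 0) (Y : Matrix n k ℝ) (j : k) : ∑ i, (A * Y) i j = 0 := by
  have h1' : (fun _ => 1) ᵥ* A = 0 := by
    rw [← mulVec_transpose, ← conjTranspose_eq_transpose_of_trivial, hA.eq, h1]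
  have h := congrFun (congrArg (· ᵥ* Y) h1') j
  rw [vecMul_vecMul, zero_vecMul] at h
  simpa [vecMul, dotProduct] using h

variable [DecidableEq n]

namespace PosSemidef

variable {C : Matrix n n ℝ} (hC : C.PosSemidef)

theorem isHermitian_sqrt : hC.sqrt.IsHermitian := by
  simp [IsHermitian, PosSemidef.sqrt, Matrix.mul_assoc, Matrix.star_eq_conjTranspose]

theorem sqrt_mul_self : hC.sqrt * hC.sqrt = C := by
  set U : Matrix n n ℝ := ↑hC.1.eigenvectorUnitary
  have hU : star U * U = 1 := Unitary.coe_star_mul_self _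
  set D := diagonal ((√·) ∘ hC.1.eigenvalues)
  calc U * D * star U * (U * D * star U) = U * (D * (star U * U) * D) * star U := by
        simp only [Matrix.mul_assoc]
    _ = C := by
      rw [hU, Matrix.mul_one, diagonal_mul_diagonal]
      conv_rhs => rw [hC.1.spectral_theorem, Unitary.conjStarAlgAut_apply]
      congr 3
      funext i
      simp [Real.mul_self_sqrt (hC.eigenvalues_nonneg i)]

theorem sqrt_mulVec_eq_zero_iff (z : n → ℝ) : hC.sqrt *ᵥ z = 0 ↔ C *ᵥ z = 0 := by
  have hquad : z ⬝ᵥ C *ᵥ z = hC.sqrt *ᵥ z ⬝ᵥ hC.sqrt *ᵥ z := by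
    conv_lhs => rw [← hC.sqrt_mul_self, ← mulVec_mulVec]
    rw [dotProduct_mulVec, ← mulVec_transpose, ← conjTranspose_eq_transpose_of_trivial,
      hC.isHermitian_sqrt.eq]
  rw [← hC.dotProduct_mulVec_zero_iff, star_trivial, hquad, dotProduct_self_eq_zero]

end PosSemidef

theorem IsHermitian.exists_mulVec_eq {A : Matrix n n ℝ} (hA : A.IsHermitian) {w : n → ℝ}
    (hw : ∀ z, A *ᵥ z = 0 → z ⬝ᵥ w = 0) : ∃ y, A *ᵥ y = w := by
  have hT := isSymmetric_toEuclideanLin_iff.mpr hA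
  have hmem : WithLp.toLp 2 w ∈ LinearMap.range A.toEuclideanLin := by
    rw [← Submodule.orthogonal_orthogonal (LinearMap.range _), hT.orthogonal_range,
      Submodule.mem_orthogonal]
    intro z hz
    rw [LinearMap.mem_ker] at hz
    simpa [EuclideanSpace.inner_eq_star_dotProduct, dotProduct_comm] using
      hw z.ofLp (by simpa using congrArg WithLp.ofLp hz)
  obtain ⟨y, hy⟩ := hmem
  exact ⟨y.ofLp, by simpa using congrArg WithLp.ofLp hy⟩

theorem IsHermitian.exists_mul_eq_of_sum_apply_eq_zero {A : Matrix n n ℝ} (hA : A.IsHermitian)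
    (hker : ∀ z, A *ᵥ z = 0 → ∃ c : ℝ, z = fun _ => c) {W : Matrix n k ℝ}
    (hW : ∀ j, ∑ i, W i j = 0) : ∃ Y : Matrix n k ℝ, A * Y = W := by
  have hcol : ∀ j, ∃ y, A *ᵥ y = fun i => W i j := by
    intro j
    refine hA.exists_mulVec_eq fun z hz => ?_
    obtain ⟨c, rfl⟩ := hker z hz
    simp [dotProduct, ← Finset.mul_sum, hW j]
  choose y hy using hcol
  refine ⟨of fun i j => y j i, ?_⟩
  ext i j
  exact congrFun (hy j) i

end Matrix

open Set

theorem ConvexOn.sum {𝕜 E β ι : Type*} [Semiring 𝕜] [PartialOrder 𝕜] [AddCommMonoid E]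
    [AddCommMonoid β] [PartialOrder β] [IsOrderedAddMonoid β] [SMul 𝕜 E] [Module 𝕜 β]
    {s : Set E} (hs : Convex 𝕜 s) {t : Finset ι} {f : ι → E → β}
    (hf : ∀ i ∈ t, ConvexOn 𝕜 s (f i)) : ConvexOn 𝕜 s fun x => ∑ i ∈ t, f i x := by
  classical
  induction t using Finset.induction_on with
  | empty => simpa using convexOn_const 0 hs
  | insert i t hi ih =>
    simp only [Finset.sum_insert hi]
    exact (hf i (Finset.mem_insert_self i t)).add
      (ih fun j hj => hf j (Finset.mem_insert_of_mem hj))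

section Euclidean

variable {d : ℕ}

theorem convexOn_vecNormSq : ConvexOn ℝ univ (vecNormSq (d := d)) :=
  ConvexOn.sum convex_univ fun j _ =>
    (even_two.convexOn_pow : ConvexOn ℝ univ fun y : ℝ => y ^ 2).comp_linearMap
      (LinearMap.proj j : (Fin d → ℝ) →ₗ[ℝ] ℝ)

theorem ConvexOn.of_convexOn_sub_mul_vecNormSq {f : (Fin d → ℝ) → ℝ} {μ : ℝ} (hμ : 0 ≤ μ)
    (hf : ConvexOn ℝ univ fun x => f x - μ / 2 * vecNormSq x) : ConvexOn ℝ univ f :=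
  (hf.add (convexOn_vecNormSq.smul (by positivity : 0 ≤ μ / 2))).congr fun x _ => by
    simp

theorem dotCLM_apply (v w : Fin d → ℝ) : dotCLM v w = v ⬝ᵥ w := by
  simp [dotCLM, dotProduct]

theorem HasFDerivAt.hasDerivAt_comp_lineMap {F : (Fin d → ℝ) → ℝ} {g x : Fin d → ℝ}
    (hF : HasFDerivAt F (dotCLM g) x) (u : Fin d → ℝ) :
    HasDerivAt (fun t : ℝ => F (AffineMap.lineMap x u t)) (g ⬝ᵥ (u - x)) 0 := by
  have hF' : HasFDerivAt F (dotCLM g) (AffineMap.lineMap x u (0 : ℝ)) := by simpa using hF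
  simpa [Function.comp_def, dotCLM_apply] using hF'.comp_hasDerivAt 0 AffineMap.hasDerivAt_lineMap

theorem HasFDerivAt.const_mul_sum_dotCLM {ι : Type*} [Fintype ι] {f : ι → (Fin d → ℝ) → ℝ}
    {g : ι → Fin d → ℝ} {x : Fin d → ℝ} (c : ℝ) (h : ∀ i, HasFDerivAt (f i) (dotCLM (g i)) x) :
    HasFDerivAt (fun u => c * ∑ i, f i u) (dotCLM (c • ∑ i, g i)) x := by
  refine ((HasFDerivAt.fun_sum fun i _ => h i).const_mul c).congr_fderiv ?_
  ext w
  simp [dotCLM_apply, smul_dotProduct, sum_dotProduct]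

theorem ConvexOn.add_dotProduct_le {F : (Fin d → ℝ) → ℝ} {g x : Fin d → ℝ}
    (hf : ConvexOn ℝ univ F) (hF : HasFDerivAt F (dotCLM g) x) (u : Fin d → ℝ) :
    F x + g ⬝ᵥ (u - x) ≤ F u := by
  have h := (hf.comp_affineMap (AffineMap.lineMap x u)).le_slope_of_hasDerivAt (mem_univ 0)
    (mem_univ 1) zero_lt_one (hF.hasDerivAt_comp_lineMap u)
  simp only [slope, sub_zero, inv_one, Function.comp_apply, AffineMap.lineMap_apply_one,
    AffineMap.lineMap_apply_zero, vsub_eq_sub, smul_eq_mul, one_mul] at h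
  linarith

end Euclidean

theorem HasDerivAt.le_of_forall_Ioc_mul_le_sub {φ : ℝ → ℝ} {D c : ℝ} (hφ : HasDerivAt φ D 0)
    (h : ∀ t ∈ Ioc (0 : ℝ) 1, c * t ≤ φ t - φ 0) : c ≤ D := by
  refine ge_of_tendsto hφ.tendsto_slope_zero_right ?_
  filter_upwards [Ioc_mem_nhdsGT zero_lt_one] with t ht
  rw [zero_add, smul_eq_mul, le_inv_mul_iff₀ ht.1, mul_comm]
  exact h t ht

section Subgradient

variable {d : ℕ} {G : (Fin d → ℝ) → EReal}

theorem isSubgradAt_iff {v x : Fin d → ℝ} :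
    IsSubgradAt G v x ↔ ∀ u, G x + ((v ⬝ᵥ (u - x) : ℝ) : EReal) ≤ G u :=
  Iff.rfl

theorem IsSubgradAt.inv_card_smul_sum {ι : Type*} [Fintype ι] [Nonempty ι]
    {v : ι → Fin d → ℝ} {x : Fin d → ℝ} (h : ∀ i, IsSubgradAt G (v i) x) :
    IsSubgradAt G ((Fintype.card ι : ℝ)⁻¹ • ∑ i, v i) x := by
  rw [isSubgradAt_iff]
  intro u
  -- the mean of the `v i ⬝ᵥ (u - x)` is at most one of them
  obtain ⟨i, -, hi⟩ := Finset.exists_le_of_sum_le Finset.univ_nonempty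
    (f := fun _ => ((Fintype.card ι : ℝ)⁻¹ • ∑ i, v i) ⬝ᵥ (u - x))
    (g := fun i => v i ⬝ᵥ (u - x)) (by simp [smul_dotProduct, sum_dotProduct])
  calc G x + ((((Fintype.card ι : ℝ)⁻¹ • ∑ i, v i) ⬝ᵥ (u - x) : ℝ) : EReal)
      ≤ G x + ((v i ⬝ᵥ (u - x) : ℝ) : EReal) := by gcongr
    _ ≤ G u := h i u

theorem forall_add_le_of_isSubgradAt_neg {F : (Fin d → ℝ) → ℝ} {g x : Fin d → ℝ}
    (hf : ConvexOn ℝ univ F) (hF : HasFDerivAt F (dotCLM g) x) (hG : IsSubgradAt G (-g) x)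
    (u : Fin d → ℝ) : (F x : EReal) + G x ≤ F u + G u := by
  have hgrad := hf.add_dotProduct_le hF u
  calc (F x : EReal) + G x ≤ ((F u + (-g) ⬝ᵥ (u - x) : ℝ) : EReal) + G x := by
        gcongr
        rw [neg_dotProduct]
        linarith
    _ = F u + (G x + ((-g) ⬝ᵥ (u - x) : ℝ)) := by
        rw [EReal.coe_add, add_assoc, add_comm (((-g) ⬝ᵥ (u - x) : ℝ) : EReal)]
    _ ≤ F u + G u := by gcongr; exact hG u

theorem isSubgradAt_neg_of_forall_add_le {F : (Fin d → ℝ) → ℝ} {g x : Fin d → ℝ}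
    (hF : HasFDerivAt F (dotCLM g) x) (hGp : GProper G) (hGc : ERealConvexOn G)
    (hmin : ∀ u, (F x : EReal) + G x ≤ F u + G u) : IsSubgradAt G (-g) x := by
  obtain ⟨x₀, hx₀⟩ := hGp.2
  have hx : G x ≠ ⊤ := by
    intro htop
    have h := hmin x₀
    lift G x₀ to ℝ using ⟨hx₀, hGp.1 x₀⟩ with r
    rw [htop, EReal.coe_add_top, top_le_iff, ← EReal.coe_add] at h
    exact EReal.coe_ne_top _ h
  rw [isSubgradAt_iff]
  intro u
  rcases eq_or_ne (G u) ⊤ with hu | hu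
  · simp [hu]
  lift G x to ℝ using ⟨hx, hGp.1 x⟩ with a ha
  lift G u to ℝ using ⟨hu, hGp.1 u⟩ with b hb
  have hslope : ∀ t ∈ Ioc (0 : ℝ) 1,
      (a - b) * t ≤ F (AffineMap.lineMap x u t) - F (AffineMap.lineMap x u (0 : ℝ)) := by
    intro t ht
    have hconv := hGc x u (1 - t) t (by linarith [ht.2]) ht.1.le (by ring)
    rw [← ha, ← hb, ← AffineMap.lineMap_apply_module] at hconv
    have h : (F x : EReal) + a ≤ F (AffineMap.lineMap x u t) + ((1 - t : ℝ) * a + t * b) :=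
      (hmin _).trans (by gcongr)
    norm_cast at h
    rw [AffineMap.lineMap_apply_zero]
    linarith
  have h := (hF.hasDerivAt_comp_lineMap u).le_of_forall_Ioc_mul_le_sub hslope
  rw [neg_dotProduct]
  norm_cast
  linarith

theorem forall_add_le_iff_isSubgradAt_neg {F : (Fin d → ℝ) → ℝ} {g x : Fin d → ℝ}
    (hf : ConvexOn ℝ univ F) (hF : HasFDerivAt F (dotCLM g) x) (hGp : GProper G)
    (hGc : ERealConvexOn G) :
    (∀ u, (F x : EReal) + G x ≤ F u + G u) ↔ IsSubgradAt G (-g) x :=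
  ⟨isSubgradAt_neg_of_forall_add_le hF hGp hGc, forall_add_le_of_isSubgradAt_neg hf hF⟩

end Subgradient

theorem stmt_0_general {m d : ℕ} (hm : 0 < m) (μ : ℝ) (hμ : 0 < μ)
    (f : Fin m → (Fin d → ℝ) → ℝ) (gradf : Fin m → (Fin d → ℝ) → (Fin d → ℝ))
    (hdiff : ∀ i x, HasFDerivAt (f i) (dotCLM (gradf i x)) x)
    (hsc : ∀ i, ConvexOn ℝ Set.univ fun x => f i x - μ / 2 * vecNormSq x)
    (G : (Fin d → ℝ) → EReal) (hGp : GProper G) (hGc : ERealConvexOn G)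
    (C : Matrix (Fin m) (Fin m) ℝ) (hC : C.PosSemidef)
    (hnull : ∀ z : Fin m → ℝ, C *ᵥ z = 0 ↔ ∃ c : ℝ, z = fun _ => c)
    (xstar : Fin d → ℝ) :
    (∀ u : Fin d → ℝ,
        ((((1 / (m : ℝ)) * ∑ i, f i xstar) : ℝ) : EReal) + G xstar ≤
          ((((1 / (m : ℝ)) * ∑ i, f i u) : ℝ) : EReal) + G u) ↔
      ∃ Y : Matrix (Fin m) (Fin d) ℝ,
        hC.sqrt * consMat m xstar = 0 ∧
        ∀ i : Fin m,
          IsSubgradAt G ((-(gradMat gradf (consMat m xstar) + hC.sqrt * Y)) i) xstar := by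
  have : NeZero m := ⟨hm.ne'⟩
  set gbar : Fin d → ℝ := (1 / (m : ℝ)) • ∑ i, gradf i xstar
  have hS : ∀ z, hC.sqrt *ᵥ z = 0 ↔ ∃ c : ℝ, z = fun _ => c := fun z =>
    (hC.sqrt_mulVec_eq_zero_iff z).trans (hnull z)
  have hS1 : hC.sqrt *ᵥ (fun _ => 1) = 0 := (hS _).2 ⟨1, rfl⟩
  have hF : ConvexOn ℝ Set.univ fun u => 1 / (m : ℝ) * ∑ i, f i u :=
    (ConvexOn.sum convex_univ fun i _ => (hsc i).of_convexOn_sub_mul_vecNormSq hμ.le).smul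
      (by positivity)
  refine (forall_add_le_iff_isSubgradAt_neg hF
    (HasFDerivAt.const_mul_sum_dotCLM _ fun i => hdiff i xstar) hGp hGc).trans
    ⟨fun hsub => ?_, fun ⟨Y, _, hY⟩ => ?_⟩
  · obtain ⟨Y, hY⟩ := hC.isHermitian_sqrt.exists_mul_eq_of_sum_apply_eq_zero (fun z => (hS z).1)
      (W := consMat m gbar - gradMat gradf (consMat m xstar)) fun j => by
        simp [consMat_row, gradMat, gbar, Finset.sum_sub_distrib, hm.ne']
    refine ⟨Y, mul_consMat_eq_zero hS1 xstar, fun i => ?_⟩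
    rw [hY, add_sub_cancel]
    exact hsub
  · convert IsSubgradAt.inv_card_smul_sum hY using 1
    ext j
    erw [Pi.smul_apply, Finset.sum_apply]
    simp [gradMat, consMat_row, Finset.sum_add_distrib,
      hC.isHermitian_sqrt.sum_mul_apply_eq_zero hS1]

/-- `x*` minimizes `F + G` iff `1_m (x*)ᵀ ∈ S_KKT`. -/
theorem stmt_0 {m d : ℕ} (hm : 0 < m) (μ L : ℝ) (hμ : 0 < μ) (hμL : μ ≤ L)
    (f : Fin m → (Fin d → ℝ) → ℝ) (gradf : Fin m → (Fin d → ℝ) → (Fin d → ℝ))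
    (hdiff : ∀ i x, HasFDerivAt (f i) (dotCLM (gradf i x)) x)
    (hsc : ∀ i, ConvexOn ℝ Set.univ fun x => f i x - μ / 2 * vecNormSq x)
    (hsmooth : ∀ i x y, vecNormSq (gradf i x - gradf i y) ≤ L ^ 2 * vecNormSq (x - y))
    (G : (Fin d → ℝ) → EReal) (hGp : GProper G) (hGc : ERealConvexOn G)
    (hGl : LowerSemicontinuous G)
    (C : Matrix (Fin m) (Fin m) ℝ) (hC : C.PosSemidef)
    (hnull : ∀ z : Fin m → ℝ, C *ᵥ z = 0 ↔ ∃ c : ℝ, z = fun _ => c)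
    (xstar : Fin d → ℝ) :
    (∀ u : Fin d → ℝ,
        ((((1 / (m : ℝ)) * ∑ i, f i xstar) : ℝ) : EReal) + G xstar ≤
          ((((1 / (m : ℝ)) * ∑ i, f i u) : ℝ) : EReal) + G u) ↔
      ∃ Y : Matrix (Fin m) (Fin d) ℝ,
        hC.sqrt * consMat m xstar = 0 ∧
        ∀ i : Fin m,
          IsSubgradAt G ((-(gradMat gradf (consMat m xstar) + hC.sqrt * Y)) i) xstar :=
  stmt_0_general hm μ hμ f gradf hdiff hsc G hGp hGc C hC hnull xstar
end

section
/- Suppose (X*, Z*, Y*) ∈ (ℝ^{m×d})³ with 1_mᵀ Y* = 0 is a fixed point of the iteration, i.e. X* is the unique minimizer of Y ↦ g(Y) + (1/(2γ))‖Y − Z*‖²_F, Z* = A X* − γ B ∇f(X*) − Y*, and Y* = Y* + C Z*. Then X* ∈ S_Fix: C X* = 0, and there exists V ∈ ℝ^{m×d} whose i-th row v_i is a subgradient of G at the i-th row x*_i of X* (G(u) ≥ G(x*_i) + ⟨v_i, u − x*_i⟩ for all u) such that 1_mᵀ(I − A)X* + γ 1_mᵀ B ∇f(X*) = −γ 1_mᵀ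 V. -/
open Matrix

/-!
Since the null space of `C` is spanned by `1`, the fixed-point relation `C Z* = 0` says that all
rows of `Z*` agree. The prox objective is then invariant under permuting the rows of its
argument, so by uniqueness of the minimizer the rows of `X*` agree as well, i.e. `C X* = 0`.
The prox objective is separable across rows, so each row `x*ᵢ` minimizes
`u ↦ G u + ‖u - z*ᵢ‖² / (2γ)`; comparing with `(1 - t) x*ᵢ + t u` by convexity and letting
`t → 0` shows that `(z*ᵢ - x*ᵢ) / γ` is a subgradient of `G` at `x*ᵢ`. Summing the rows of
`V = (Z* - X*) / γ` and using `1ᵀ Y* = 0` gives the remaining identity.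
-/

lemma Matrix.mul_eq_zero_iff_row_eq {ι n R : Type*} [Fintype ι] [NonUnitalNonAssocSemiring R]
    {C : Matrix ι ι R} (hnull : ∀ z : ι → R, C *ᵥ z = 0 ↔ ∃ c : R, z = fun _ => c)
    (M : Matrix ι n R) : C * M = 0 ↔ ∀ i i', M i = M i' := by
  have hcol : ∀ i j, (C * M) i j = (C *ᵥ fun k => M k j) i := fun _ _ => rfl
  constructor
  · intro h i i'
    ext j
    obtain ⟨c, hc⟩ := (hnull fun k => M k j).mp (funext fun k => by rw [← hcol, h]; rfl)
    exact (congrFun hc i).trans (congrFun hc i').symm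
  · intro h
    ext i j
    rw [hcol, (hnull _).mpr ⟨M i j, funext fun k => congrFun (h k i) j⟩]
    rfl

namespace EReal

lemma coe_finset_sum {ι : Type*} (s : Finset ι) (f : ι → ℝ) :
    ((∑ i ∈ s, f i : ℝ) : EReal) = ∑ i ∈ s, (f i : EReal) :=
  map_sum (⟨⟨Real.toEReal, coe_zero⟩, coe_add⟩ : ℝ →+ EReal) f s

lemma finset_sum_ne_bot {ι : Type*} {s : Finset ι} {f : ι → EReal} (h : ∀ i ∈ s, f i ≠ ⊥) :
    ∑ i ∈ s, f i ≠ ⊥ :=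
  Finset.sum_induction f (· ≠ ⊥) (fun _ _ ha hb => add_ne_bot_iff.mpr ⟨ha, hb⟩)
    (coe_ne_bot 0) h

lemma finset_sum_ne_top {ι : Type*} {s : Finset ι} {f : ι → EReal} (h : ∀ i ∈ s, f i ≠ ⊤) :
    ∑ i ∈ s, f i ≠ ⊤ :=
  Finset.sum_induction f (· ≠ ⊤) (fun _ _ => add_ne_top) (coe_ne_top 0) h

lemma apply_le_of_forall_sum_le {ι α : Type*} [Fintype ι] [DecidableEq ι]
    {f : ι → α → EReal} (hbot : ∀ i a, f i a ≠ ⊥) {p : ι → α}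
    (hp : ∀ q : ι → α, ∑ i, f i (p i) ≤ ∑ i, f i (q i)) (hfin : ∑ i, f i (p i) ≠ ⊤)
    (i : ι) (a : α) : f i (p i) ≤ f i a := by
  set R := ∑ k ∈ Finset.univ.erase i, f k (p k)
  have hsplit : ∑ k, f k (p k) = f i (p i) + R :=
    (Finset.add_sum_erase _ _ (Finset.mem_univ i)).symm
  have hsplit' : ∑ k, f k (Function.update p i a k) = f i a + R := by
    rw [← Finset.add_sum_erase _ _ (Finset.mem_univ i), Function.update_self]
    congr 1
    exact Finset.sum_congr rfl fun k hk => by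
      rw [Function.update_of_ne (Finset.ne_of_mem_erase hk)]
  have hR_top : R ≠ ⊤ := fun h => hfin (by rw [hsplit, h, add_top_of_ne_bot (hbot i (p i))])
  have hR_bot : R ≠ ⊥ := finset_sum_ne_bot fun k _ => hbot k (p k)
  lift R to ℝ using ⟨hR_top, hR_bot⟩ with r
  have := hp (Function.update p i a)
  rw [hsplit, hsplit', add_comm _ (r : EReal), add_comm _ (r : EReal)] at this
  exact (addLECancellable_coe r).add_le_add_iff_left.mp this

end EReal

lemma le_of_forall_le_add_mul {a b K : ℝ} (h : ∀ t : ℝ, 0 < t → t ≤ 1 → a ≤ b + t * K) :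
    a ≤ b := by
  have hlim : Filter.Tendsto (fun t : ℝ => b + t * K) (nhdsWithin 0 (Set.Ioo 0 1)) (nhds b) := by
    refine tendsto_nhdsWithin_of_tendsto_nhds ?_
    exact Continuous.tendsto' (by fun_prop) 0 b (by simp)
  have : (nhdsWithin (0 : ℝ) (Set.Ioo 0 1)).NeBot :=
    left_nhdsWithin_Ioo_neBot zero_lt_one
  exact ge_of_tendsto hlim (eventually_nhdsWithin_of_forall fun t ht => h t ht.1 ht.2.le)

lemma vecNormSq_eq_dotProduct {d : ℕ} (v : Fin d → ℝ) : vecNormSq v = v ⬝ᵥ v := by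
  simp only [vecNormSq, dotProduct, sq]

lemma vecNormSq_add_smul {d : ℕ} (v w : Fin d → ℝ) (t : ℝ) :
    vecNormSq (v + t • w) = vecNormSq v + 2 * t * (v ⬝ᵥ w) + t ^ 2 * vecNormSq w := by
  simp only [vecNormSq_eq_dotProduct, add_dotProduct, dotProduct_add, smul_dotProduct,
    dotProduct_smul, smul_eq_mul, dotProduct_comm w v]
  ring

noncomputable def proxObjVec {d : ℕ} (G : (Fin d → ℝ) → EReal) (γ : ℝ) (z u : Fin d → ℝ) :
    EReal :=
  G u + ((1 / (2 * γ) * vecNormSq (u - z) : ℝ) : EReal)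

lemma isSubgradAt_of_forall_proxObjVec_le {d : ℕ} {G : (Fin d → ℝ) → EReal} (hGp : GProper G)
    (hGc : ERealConvexOn G) {γ : ℝ} (hγ : 0 < γ) {x z : Fin d → ℝ}
    (hmin : ∀ u, proxObjVec G γ z x ≤ proxObjVec G γ z u) :
    IsSubgradAt G (γ⁻¹ • (z - x)) x := by
  have hx_top : G x ≠ ⊤ := by
    obtain ⟨x₀, hx₀⟩ := hGp.2
    have := ne_top_of_le_ne_top (EReal.add_ne_top hx₀ (EReal.coe_ne_top _)) (hmin x₀)
    exact ((EReal.add_ne_top_iff_ne_top_left (EReal.coe_ne_bot _) (EReal.coe_ne_top _)).mp this)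
  intro u
  rcases eq_or_ne (G u) ⊤ with hu | hu
  · simp [hu]
  lift G x to ℝ using ⟨hx_top, hGp.1 x⟩ with a ha
  lift G u to ℝ using ⟨hu, hGp.1 u⟩ with b hb
  set P := (z - x) ⬝ᵥ (u - x)
  suffices a + γ⁻¹ * P ≤ b by
    rw [← EReal.coe_add, EReal.coe_le_coe_iff]
    convert this using 2
    simp only [P, dotProduct, Finset.mul_sum, Pi.smul_apply, Pi.sub_apply, smul_eq_mul, mul_assoc]
  refine le_of_forall_le_add_mul (K := 1 / (2 * γ) * vecNormSq (u - x)) fun t ht ht1 => ?_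
  set y := (1 - t) • x + t • u
  have hconv : G y ≤ (1 - t : ℝ) * G x + (t : ℝ) * G u :=
    hGc x u (1 - t) t (by linarith) ht.le (by ring)
  rw [← ha, ← hb, ← EReal.coe_mul, ← EReal.coe_mul, ← EReal.coe_add] at hconv
  lift G y to ℝ using ⟨ne_top_of_le_ne_top (EReal.coe_ne_top _) hconv, hGp.1 y⟩ with s hs
  have hs_le : s ≤ (1 - t) * a + t * b := EReal.coe_le_coe_iff.mp hconv
  have hopt : a + 1 / (2 * γ) * vecNormSq (x - z) ≤ s + 1 / (2 * γ) * vecNormSq (y - z) := by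
    have := hmin y
    rwa [proxObjVec, proxObjVec, ← ha, ← hs, ← EReal.coe_add, ← EReal.coe_add,
      EReal.coe_le_coe_iff] at this
  have hy : y - z = (x - z) + t • (u - x) := by
    simp only [y, sub_smul, one_smul, smul_sub]; abel
  rw [hy, vecNormSq_add_smul, ← neg_sub z x, neg_dotProduct] at hopt
  have hγ' : γ⁻¹ = 2 * (1 / (2 * γ)) := by field_simp
  have : t * (a + γ⁻¹ * P) ≤ t * (b + t * (1 / (2 * γ) * vecNormSq (u - x))) := by
    rw [hγ']; linarith
  exact le_of_mul_le_mul_left this ht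

section Prox

variable {m d : ℕ}

lemma proxObj_eq_sum (G : (Fin d → ℝ) → EReal) (γ : ℝ) (Z Y : Matrix (Fin m) (Fin d) ℝ) :
    proxObj G γ Z Y = ∑ i, proxObjVec G γ (Z i) (Y i) := by
  simp only [proxObj, proxObjVec, gSum, frobSq, vecNormSq, Finset.sum_add_distrib, Finset.mul_sum,
    EReal.coe_finset_sum, Matrix.sub_apply, Pi.sub_apply]

lemma proxObj_submatrix (G : (Fin d → ℝ) → EReal) (γ : ℝ) (σ : Equiv.Perm (Fin m))
    (Z Y : Matrix (Fin m) (Fin d) ℝ) :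
    proxObj G γ (Z.submatrix σ id) (Y.submatrix σ id) = proxObj G γ Z Y := by
  simp only [proxObj_eq_sum]
  exact Equiv.sum_comp σ fun i => proxObjVec G γ (Z i) (Y i)

lemma IsProx.row_eq_of_row_eq {G : (Fin d → ℝ) → EReal} {γ : ℝ}
    {Z P : Matrix (Fin m) (Fin d) ℝ} (hP : IsProx G γ Z P) (hZ : ∀ i i', Z i = Z i')
    (i i' : Fin m) : P i = P i' := by
  have hZσ : Z.submatrix (Equiv.swap i i') id = Z := by
    ext k j
    simp only [Matrix.submatrix_apply, id, hZ (Equiv.swap i i' k) k]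
  have hPσ : P.submatrix (Equiv.swap i i') id = P := by
    refine hP.2 _ fun Y => ?_
    have hinv := proxObj_submatrix G γ (Equiv.swap i i') Z P
    rw [hZσ] at hinv
    exact hinv ▸ hP.1 Y
  calc P i = P.submatrix (Equiv.swap i i') id i' := by ext j; simp
    _ = P i' := congrFun hPσ i'

lemma IsProx.forall_proxObjVec_le {G : (Fin d → ℝ) → EReal} {γ : ℝ} (hGp : GProper G)
    {Z P : Matrix (Fin m) (Fin d) ℝ} (hP : IsProx G γ Z P) (i : Fin m) (u : Fin d → ℝ) :
    proxObjVec G γ (Z i) (P i) ≤ proxObjVec G γ (Z i) u := by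
  classical
  obtain ⟨x₀, hx₀⟩ := hGp.2
  have hbot : ∀ k v, proxObjVec G γ (Z k) v ≠ ⊥ := fun k v =>
    EReal.add_ne_bot_iff.mpr ⟨hGp.1 v, EReal.coe_ne_bot _⟩
  have hmin : ∀ Y : Fin m → Fin d → ℝ,
      ∑ k, proxObjVec G γ (Z k) (P k) ≤ ∑ k, proxObjVec G γ (Z k) (Y k) := fun Y =>
    (proxObj_eq_sum G γ Z P).symm.trans_le ((hP.1 Y).trans_eq (proxObj_eq_sum G γ Z Y))
  have hfin : ∑ k, proxObjVec G γ (Z k) x₀ ≠ ⊤ :=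
    EReal.finset_sum_ne_top fun k _ => EReal.add_ne_top hx₀ (EReal.coe_ne_top _)
  exact EReal.apply_le_of_forall_sum_le hbot hmin (ne_top_of_le_ne_top hfin (hmin _)) i u

end Prox

theorem stmt_2_general {m d : ℕ} (γ : ℝ) (hγ : 0 < γ)
    (gradf : Fin m → (Fin d → ℝ) → (Fin d → ℝ))
    (G : (Fin d → ℝ) → EReal) (hGp : GProper G) (hGc : ERealConvexOn G)
    (A B C : Matrix (Fin m) (Fin m) ℝ)
    (hnull : ∀ z : Fin m → ℝ, C *ᵥ z = 0 ↔ ∃ c : ℝ, z = fun _ => c)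
    (Xs Zs Ys : Matrix (Fin m) (Fin d) ℝ)
    (hYs : onesV m ᵥ* Ys = 0)
    (hXs : IsProx G γ Zs Xs)
    (hZs : Zs = A * Xs - γ • (B * gradMat gradf Xs) - Ys)
    (hfix : Ys = Ys + C * Zs) :
    C * Xs = 0 ∧
      ∃ V : Matrix (Fin m) (Fin d) ℝ,
        (∀ i : Fin m, IsSubgradAt G (V i) (Xs i)) ∧
        onesV m ᵥ* ((1 - A) * Xs) + γ • (onesV m ᵥ* (B * gradMat gradf Xs)) =
          -(γ • (onesV m ᵥ* V)) := by
  have hZ : ∀ i i', Zs i = Zs i' :=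
    (Matrix.mul_eq_zero_iff_row_eq hnull Zs).mp (left_eq_add.mp hfix)
  have hCX : C * Xs = 0 :=
    (Matrix.mul_eq_zero_iff_row_eq hnull Xs).mpr (hXs.row_eq_of_row_eq hZ)
  refine ⟨hCX, γ⁻¹ • (Zs - Xs), fun i => ?_, ?_⟩
  · exact isSubgradAt_of_forall_proxObjVec_le hGp hGc hγ (hXs.forall_proxObjVec_le hGp i)
  · rw [Matrix.vecMul_smul, smul_smul, mul_inv_cancel₀ hγ.ne', one_smul, hZs]
    simp only [Matrix.sub_mul, Matrix.one_mul, Matrix.vecMul_sub, Matrix.vecMul_smul, hYs]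
    abel

/-- any fixed point of the iteration belongs to `S_Fix`. -/
theorem stmt_2 {m d : ℕ} (μ L γ : ℝ) (hμ : 0 < μ) (hμL : μ ≤ L) (hγ : 0 < γ)
    (f : Fin m → (Fin d → ℝ) → ℝ) (gradf : Fin m → (Fin d → ℝ) → (Fin d → ℝ))
    (hdiff : ∀ i x, HasFDerivAt (f i) (dotCLM (gradf i x)) x)
    (hsc : ∀ i, ConvexOn ℝ Set.univ fun x => f i x - μ / 2 * vecNormSq x)
    (hsmooth : ∀ i x y, vecNormSq (gradf i x - gradf i y) ≤ L ^ 2 * vecNormSq (x - y))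
    (G : (Fin d → ℝ) → EReal) (hGp : GProper G) (hGc : ERealConvexOn G)
    (hGl : LowerSemicontinuous G)
    (A B C : Matrix (Fin m) (Fin m) ℝ) (hC : C.PosSemidef)
    (hnull : ∀ z : Fin m → ℝ, C *ᵥ z = 0 ↔ ∃ c : ℝ, z = fun _ => c)
    (Xs Zs Ys : Matrix (Fin m) (Fin d) ℝ)
    (hYs : onesV m ᵥ* Ys = 0)
    (hXs : IsProx G γ Zs Xs)
    (hZs : Zs = A * Xs - γ • (B * gradMat gradf Xs) - Ys)
    (hfix : Ys = Ys + C * Zs) :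
    C * Xs = 0 ∧
      ∃ V : Matrix (Fin m) (Fin d) ℝ,
        (∀ i : Fin m, IsSubgradAt G (V i) (Xs i)) ∧
        onesV m ᵥ* ((1 - A) * Xs) + γ • (onesV m ᵥ* (B * gradMat gradf Xs)) =
          -(γ • (onesV m ᵥ* V)) :=
  stmt_2_general γ hγ gradf G hGp hGc A B C hnull Xs Zs Ys hYs hXs hZs hfix
end

section
/- Let 0 < μ ≤ L and let a ≤ b be real numbers with μ a ≤ L b. Define q(γ) = max(|a − γL|, |b − γμ|) for γ ∈ ℝ. Then q(γ) ≥ (L b − μ a)/(L + μ) for every γ ∈ ℝ, and equality holds at γ* = (a + b)/(L + μ); i.e., γ* is a global minimizer of q with optimal value q* = (L b − μ a)/(L + μ). (With a = λ_min(D), b = λ_max(D), this identifies the optimal step-size γ* = (λ_max(D)+λ_min(D))/(L+μ) and optimal contraction factor q* = (L λ_max(D) − μ λ_min(D))/(L+μ) in Theorem 3.) -/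
/-! The combination `μ (γL − a) + L (b − γμ) = Lb − μa` does not depend on `γ`, and it is at
most `(L + μ) q(γ)` because both residuals are bounded by `q(γ)` in absolute value. At `γ*` the
two residuals are exactly `−q*` and `q*`, so the bound is attained. -/

open Matrix

lemma mul_add_mul_le_add_mul_max_abs {s t : ℝ} (hs : 0 ≤ s) (ht : 0 ≤ t) (x y : ℝ) :
    s * x + t * y ≤ (s + t) * max |x| |y| :=
  calc s * x + t * y ≤ s * max |x| |y| + t * max |x| |y| := by
        gcongr
        · exact (le_abs_self x).trans (le_max_left _ _)
        · exact (le_abs_self y).trans (le_max_right _ _)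
    _ = (s + t) * max |x| |y| := by ring

lemma residuals_at_optimal_step {μ L : ℝ} (hS : L + μ ≠ 0) (a b : ℝ) :
    a - (a + b) / (L + μ) * L = -((L * b - μ * a) / (L + μ)) ∧
      b - (a + b) / (L + μ) * μ = (L * b - μ * a) / (L + μ) := by
  constructor <;> field_simp <;> ring

theorem stmt_6_general (μ L a b : ℝ) (hμ : 0 < μ) (hμL : μ ≤ L)
    (h : μ * a ≤ L * b) :
    (∀ γ : ℝ, (L * b - μ * a) / (L + μ) ≤ max |a - γ * L| |b - γ * μ|) ∧
      max |a - ((a + b) / (L + μ)) * L| |b - ((a + b) / (L + μ)) * μ| =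
        (L * b - μ * a) / (L + μ) := by
  have hS : 0 < L + μ := by linarith
  refine ⟨fun γ => ?_, ?_⟩
  · rw [div_le_iff₀ hS, abs_sub_comm a]
    calc L * b - μ * a = μ * (γ * L - a) + L * (b - γ * μ) := by ring
      _ ≤ (μ + L) * max |γ * L - a| |b - γ * μ| :=
        mul_add_mul_le_add_mul_max_abs hμ.le (hμ.le.trans hμL) _ _
      _ = _ := by ring
  · obtain ⟨hlow, hhigh⟩ := residuals_at_optimal_step hS.ne' a b
    have hq : 0 ≤ (L * b - μ * a) / (L + μ) := div_nonneg (by linarith) hS.le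
    rw [hlow, hhigh, abs_neg, abs_of_nonneg hq, max_self]

/-- the optimal step-size and optimal contraction factor. -/
theorem stmt_6 (μ L a b : ℝ) (hμ : 0 < μ) (hμL : μ ≤ L) (hab : a ≤ b)
    (h : μ * a ≤ L * b) :
    (∀ γ : ℝ, (L * b - μ * a) / (L + μ) ≤ max |a - γ * L| |b - γ * μ|) ∧
      max |a - ((a + b) / (L + μ)) * L| |b - ((a + b) / (L + μ)) * μ| =
        (L * b - μ * a) / (L + μ) :=
  stmt_6_general μ L a b hμ hμL h
end

section
/- Let W ∈ ℝ^{m×m} be symmetric with W 1_m = 1_m, −I ≺ W ⪯ I, and null space of I − W equal to span(1_m), and let 0 < μ < L. Then the choice A = B = (I + W)/2, C = (I − W)/2, D = I (the NIDS/Exact-Diffusion parameters) satisfies: (i) Assumption 2: C is symmetric positive semidefinite with null space exactly span(1_m); (ii) Assumption 3: 1ᵀ A 1 = m and 1ᵀ B = 1ᵀ; (iii) Assumption 4: A = B D with D = I symmetric, −I ≺ D ⪯ I, B symmetric, I − C ≻ 0, B C = C B, and (L − μ)² B² ≺ (L + μ)² (I − C); and moreover (iv) B² ⪯ I − C (the additional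 condition of Corollary 4). -/
open Matrix

/-!
Write `B = (I + W)/2` and `C = (I − W)/2`, so that `B + C = I`; in particular `I − C = B` and
`B` commutes with `C`. Commuting positive semidefinite matrices have a positive semidefinite
product, hence `I − C − B² = B − B² = B C ⪰ 0`, and
`(L + μ)² (I − C) − (L − μ)² B² = (L − μ)² B C + 4 L μ B ≻ 0` because `B ≻ 0`.
-/

namespace Matrix

open scoped ComplexOrder

variable {n 𝕜 : Type*} [Fintype n] [DecidableEq n] [RCLike 𝕜] {B C : Matrix n n 𝕜}

lemma commute_of_add_eq_one (h : B + C = 1) : Commute B C := by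
  obtain rfl : C = 1 - B := eq_sub_of_add_eq' h
  exact (Commute.one_right B).sub_right (Commute.refl B)

open scoped MatrixOrder Matrix.Norms.L2Operator in
lemma PosSemidef.one_sub_sub_sq_of_add_eq_one (hB : B.PosSemidef) (hC : C.PosSemidef)
    (h : B + C = 1) : (1 - C - B ^ 2).PosSemidef := by
  have hBC : 1 - C - B ^ 2 = B * C := by
    obtain rfl : C = 1 - B := eq_sub_of_add_eq' h
    noncomm_ring
  rw [hBC, ← nonneg_iff_posSemidef]
  exact (commute_of_add_eq_one h).mul_nonneg hB.nonneg hC.nonneg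

lemma PosDef.smul_one_sub_sub_smul_sq_of_add_eq_one (hB : B.PosDef) (hC : C.PosSemidef)
    (h : B + C = 1) {s t : ℝ} (hs : 0 ≤ s) (hst : s < t) :
    (t • (1 - C) - s • B ^ 2).PosDef := by
  have hsplit : t • (1 - C) - s • B ^ 2 = s • (1 - C - B ^ 2) + (t - s) • B := by
    rw [← eq_sub_of_add_eq h]
    module
  rw [hsplit]
  exact PosDef.posSemidef_add ((hB.posSemidef.one_sub_sub_sq_of_add_eq_one hC h).smul hs)
    (hB.smul (sub_pos.2 hst))

end Matrix

/-- the NIDS/Exact-Diffusion parameters `A = B = (I+W)/2`, `C = (I−W)/2`,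
`D = I` satisfy Assumptions 2, 3, 4 and the extra condition of Corollary 4. -/
theorem stmt_14 {m : ℕ} (W : Matrix (Fin m) (Fin m) ℝ) (μ L : ℝ)
    (hμ : 0 < μ) (hμL : μ < L)
    (hWsym : W.IsSymm) (hW1 : W *ᵥ onesV m = onesV m)
    (hWlb : ((1 : Matrix (Fin m) (Fin m) ℝ) + W).PosDef)
    (hWub : ((1 : Matrix (Fin m) (Fin m) ℝ) - W).PosSemidef)
    (hWnull : ∀ z : Fin m → ℝ, ((1 : Matrix (Fin m) (Fin m) ℝ) - W) *ᵥ z = 0 ↔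
      ∃ c : ℝ, z = fun _ => c) :
    -- (i) Assumption 2 for C = (I − W)/2
    (((2 : ℝ)⁻¹ • (1 - W) : Matrix (Fin m) (Fin m) ℝ).PosSemidef ∧
      (∀ z : Fin m → ℝ,
        ((2 : ℝ)⁻¹ • (1 - W) : Matrix (Fin m) (Fin m) ℝ) *ᵥ z = 0 ↔
          ∃ c : ℝ, z = fun _ => c)) ∧
    -- (ii) Assumption 3 for A = B = (I + W)/2
    (onesV m ⬝ᵥ (((2 : ℝ)⁻¹ • (1 + W) : Matrix (Fin m) (Fin m) ℝ) *ᵥ onesV m) = (m : ℝ) ∧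
      onesV m ᵥ* ((2 : ℝ)⁻¹ • (1 + W) : Matrix (Fin m) (Fin m) ℝ) = onesV m) ∧
    -- (iii) Assumption 4 with D = I
    (((2 : ℝ)⁻¹ • (1 + W) : Matrix (Fin m) (Fin m) ℝ) =
        ((2 : ℝ)⁻¹ • (1 + W)) * (1 : Matrix (Fin m) (Fin m) ℝ) ∧
      (1 : Matrix (Fin m) (Fin m) ℝ).IsSymm ∧
      ((1 : Matrix (Fin m) (Fin m) ℝ) + 1).PosDef ∧
      ((1 : Matrix (Fin m) (Fin m) ℝ) - 1).PosSemidef ∧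
      ((2 : ℝ)⁻¹ • (1 + W) : Matrix (Fin m) (Fin m) ℝ).IsSymm ∧
      ((1 : Matrix (Fin m) (Fin m) ℝ) - (2 : ℝ)⁻¹ • (1 - W)).PosDef ∧
      ((2 : ℝ)⁻¹ • (1 + W) : Matrix (Fin m) (Fin m) ℝ) * ((2 : ℝ)⁻¹ • (1 - W)) =
        ((2 : ℝ)⁻¹ • (1 - W)) * ((2 : ℝ)⁻¹ • (1 + W)) ∧
      ((L + μ) ^ 2 • ((1 : Matrix (Fin m) (Fin m) ℝ) - (2 : ℝ)⁻¹ • (1 - W))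
          - (L - μ) ^ 2 • ((2 : ℝ)⁻¹ • (1 + W) : Matrix (Fin m) (Fin m) ℝ) ^ 2).PosDef) ∧
    -- (iv) B² ⪯ I − C
    ((1 : Matrix (Fin m) (Fin m) ℝ) - (2 : ℝ)⁻¹ • (1 - W)
        - ((2 : ℝ)⁻¹ • (1 + W) : Matrix (Fin m) (Fin m) ℝ) ^ 2).PosSemidef := by
  have hBC : ((2 : ℝ)⁻¹ • (1 + W) : Matrix (Fin m) (Fin m) ℝ) + (2 : ℝ)⁻¹ • (1 - W) = 1 := by
    module
  have hB : ((2 : ℝ)⁻¹ • (1 + W) : Matrix (Fin m) (Fin m) ℝ).PosDef := hWlb.smul (by norm_num)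
  have hC : ((2 : ℝ)⁻¹ • (1 - W) : Matrix (Fin m) (Fin m) ℝ).PosSemidef := hWub.smul (by norm_num)
  have hBsym : ((2 : ℝ)⁻¹ • (1 + W) : Matrix (Fin m) (Fin m) ℝ).IsSymm := by
    simp only [IsSymm, transpose_smul, transpose_add, transpose_one, hWsym.eq]
  have hB1 : ((2 : ℝ)⁻¹ • (1 + W) : Matrix (Fin m) (Fin m) ℝ) *ᵥ onesV m = onesV m := by
    rw [smul_mulVec, add_mulVec, one_mulVec, hW1]
    module
  refine ⟨⟨hC, fun z => ?_⟩, ⟨?_, ?_⟩, ⟨(mul_one _).symm, isSymm_one, PosDef.one.add PosDef.one,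
    by simpa using PosSemidef.zero, hBsym, eq_sub_of_add_eq hBC ▸ hB, commute_of_add_eq_one hBC,
    hB.smul_one_sub_sub_smul_sq_of_add_eq_one hC hBC (sq_nonneg _)
      (by nlinarith [hμ.trans hμL])⟩,
    hB.posSemidef.one_sub_sub_sq_of_add_eq_one hC hBC⟩
  · rw [smul_mulVec, smul_eq_zero, or_iff_right (by norm_num), hWnull]
  · rw [hB1]
    simp [onesV, dotProduct]
  · rw [← mulVec_transpose, hBsym.eq, hB1]
end

section
/- (Lemma 5, transformation identity.) Suppose A = B D with B, C, D ∈ ℝ^{m×m}, B and C symmetric, B C = C B, and C positive semidefinite with PSD square root √C. Let {(X^k, Z^k, Y^k)}_{k≥0} be generated by X^k = prox_{γg}(Z^k), Z^{k+1} = A X^k − γ B ∇f(X^k) − Y^k, Y^{k+1} = Y^k + C Z^{k+1}, from Z⁰ ∈ ℝ^{m×d} and Y⁰ = 0. Define Ũ^1 = (Z̃^1, W̃^1) with Z̃^1 = D X⁰ − γ ∇f(X⁰) and W̃^1 = √C Z̃^1, and Ũ^{k+1} = T(Ũ^k) for k ≥ 1, where T(Z, W) = (P − √C W, √C P + (I −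 C) W) with P = D·prox_{γg}(B Z) − γ ∇f(prox_{γg}(B Z)). Then for every k ≥ 1: Z^k = B Z̃^k and Y^k = B √C W̃^k, where Ũ^k = (Z̃^k, W̃^k). -/
open Matrix

/-- The old Mathlib `Matrix.PosSemidef.sqrt` (removed since), with its original definition. -/
noncomputable def psdSqrt {n 𝕜 : Type*} [Fintype n] [DecidableEq n] [RCLike 𝕜]
    [PartialOrder 𝕜] [StarOrderedRing 𝕜]
    {A : Matrix n n 𝕜} (hA : A.PosSemidef) : Matrix n n 𝕜 :=
  (hA.1.eigenvectorUnitary : Matrix n n 𝕜) * diagonal ((↑) ∘ (√·) ∘ hA.1.eigenvalues) *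
  (star hA.1.eigenvectorUnitary : Matrix n n 𝕜)

/-!
Induction on `k`, writing `S = √C`, so that `S * S = C`. Put `P = D X^k - γ ∇f(X^k)`. Once
`Z^k = B Z̃^k`, we get `X^k = prox(B Z̃^k)`, and `A = B D` turns the `Z`-update into
`Z^{k+1} = B (P - S W̃^k) = B Z̃^{k+1}`. The `Y`-update matches `B S W̃^{k+1}` because `B` and
`S` both commute with `C`.
-/

theorem psdSqrt_mul_self {n : Type*} [Fintype n] [DecidableEq n] {A : Matrix n n ℝ}
    (hA : A.PosSemidef) : psdSqrt hA * psdSqrt hA = A := by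
  set U : Matrix n n ℝ := (hA.1.eigenvectorUnitary : Matrix n n ℝ)
  have hU : star U * U = 1 := Unitary.coe_star_mul_self _
  have hD : diagonal ((RCLike.ofReal ∘ (√·) ∘ hA.1.eigenvalues) : n → ℝ) *
      diagonal ((RCLike.ofReal ∘ (√·) ∘ hA.1.eigenvalues) : n → ℝ) =
      diagonal (RCLike.ofReal ∘ hA.1.eigenvalues) := by
    rw [diagonal_mul_diagonal]
    congr 1
    funext i
    simp [Real.mul_self_sqrt (hA.eigenvalues_nonneg i)]
  conv_rhs => rw [hA.1.spectral_theorem, Unitary.conjStarAlgAut_apply]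
  rw [← hD]
  simp only [psdSqrt, Matrix.mul_assoc]
  rw [← Matrix.mul_assoc (star U) U, hU, Matrix.one_mul]

section

variable {n p R : Type*} [Fintype n] [Ring R] {B C S : Matrix n n R}

theorem mul_mul_mul_self_eq_of_mul_comm (hS : S * S = C) (hBC : B * C = C * B)
    (M : Matrix n p R) : B * (S * (S * M)) = C * (B * M) := by
  rw [← Matrix.mul_assoc S, hS, ← Matrix.mul_assoc, hBC, Matrix.mul_assoc]

theorem mul_mul_add_mul_mul_sub_eq_mul_mul [DecidableEq n] (hS : S * S = C) (hBC : B * C = C * B)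
    (P W : Matrix n p R) :
    B * (S * W) + C * (B * (P - S * W)) = B * (S * (S * P + (1 - C) * W)) := by
  have hBSS := mul_mul_mul_self_eq_of_mul_comm (p := p) hS hBC
  have hBSC : B * (S * (C * W)) = C * (B * (S * W)) := by
    rw [← hBSS, ← hS, Matrix.mul_assoc]
  simp only [Matrix.mul_add, Matrix.mul_sub, Matrix.sub_mul, Matrix.one_mul, ← hBSS, hBSC]
  abel

end

theorem stmt_15_general {m d : ℕ} (γ : ℝ)
    (gradf : Fin m → (Fin d → ℝ) → (Fin d → ℝ))
    (A B C D : Matrix (Fin m) (Fin m) ℝ)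
    (hC : C.PosSemidef) (hBC : B * C = C * B)
    (hABD : A = B * D)
    -- the proximal operator of γ g
    (prox : Matrix (Fin m) (Fin d) ℝ → Matrix (Fin m) (Fin d) ℝ)
    -- the iterates, started from Y⁰ = 0
    (X Z Y : ℕ → Matrix (Fin m) (Fin d) ℝ)
    (hXit : ∀ k, X k = prox (Z k))
    (hZit : ∀ k, Z (k + 1) = A * X k - γ • (B * gradMat gradf (X k)) - Y k)
    (hYit : ∀ k, Y (k + 1) = Y k + C * Z (k + 1))
    (hY0 : Y 0 = 0)
    -- the transformed sequence Ũ^k = (Z̃^k, W̃^k)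
    (Zt Wt : ℕ → Matrix (Fin m) (Fin d) ℝ)
    (hZt1 : Zt 1 = D * X 0 - γ • gradMat gradf (X 0))
    (hWt1 : Wt 1 = psdSqrt hC * Zt 1)
    (hrec : ∀ k, 1 ≤ k →
      Zt (k + 1) = (D * prox (B * Zt k) - γ • gradMat gradf (prox (B * Zt k)))
          - psdSqrt hC * Wt k ∧
      Wt (k + 1) = psdSqrt hC * (D * prox (B * Zt k) - γ • gradMat gradf (prox (B * Zt k)))
          + (1 - C) * Wt k) :
    ∀ k, 1 ≤ k → Z k = B * Zt k ∧ Y k = B * (psdSqrt hC * Wt k) := by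
  have hS : psdSqrt hC * psdSqrt hC = C := psdSqrt_mul_self hC
  intro k hk
  induction k, hk using Nat.le_induction with
  | base =>
    have hZ : Z 1 = B * Zt 1 := by
      rw [hZit 0, hY0, hABD, hZt1]
      simp only [sub_zero, Matrix.mul_sub, Matrix.mul_smul, Matrix.mul_assoc]
    refine ⟨hZ, ?_⟩
    rw [hYit 0, hY0, zero_add, hZ, hWt1, mul_mul_mul_self_eq_of_mul_comm hS hBC]
  | succ k hk ih =>
    obtain ⟨hZk, hYk⟩ := ih
    obtain ⟨hZt, hWt⟩ := hrec k hk
    have hX : X k = prox (B * Zt k) := by rw [hXit, hZk]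
    have hZ : Z (k + 1) = B * Zt (k + 1) := by
      rw [hZit k, hABD, hYk, hX, hZt]
      simp only [Matrix.mul_sub, Matrix.mul_smul, Matrix.mul_assoc]
    refine ⟨hZ, ?_⟩
    rw [hYit k, hYk, hZ, hWt, hZt]
    exact mul_mul_add_mul_mul_sub_eq_mul_mul hS hBC _ _

/-- Lemma 5: the transformation identity relating the iterates to the
fixed-point iteration of `T`. -/
theorem stmt_15 {m d : ℕ} (μ L γ : ℝ) (hμ : 0 < μ) (hμL : μ ≤ L) (hγ : 0 < γ)
    (f : Fin m → (Fin d → ℝ) → ℝ) (gradf : Fin m → (Fin d → ℝ) → (Fin d → ℝ))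
    (hdiff : ∀ i x, HasFDerivAt (f i) (dotCLM (gradf i x)) x)
    (hsc : ∀ i, ConvexOn ℝ Set.univ fun x => f i x - μ / 2 * vecNormSq x)
    (hsmooth : ∀ i x y, vecNormSq (gradf i x - gradf i y) ≤ L ^ 2 * vecNormSq (x - y))
    (G : (Fin d → ℝ) → EReal) (hGp : GProper G) (hGc : ERealConvexOn G)
    (hGl : LowerSemicontinuous G)
    (A B C D : Matrix (Fin m) (Fin m) ℝ)
    (hC : C.PosSemidef) (hBsym : B.IsSymm) (hBC : B * C = C * B)
    (hABD : A = B * D)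
    -- the proximal operator of γ g
    (prox : Matrix (Fin m) (Fin d) ℝ → Matrix (Fin m) (Fin d) ℝ)
    (hprox : ∀ Z, IsProx G γ Z (prox Z))
    -- the iterates, started from Y⁰ = 0
    (X Z Y : ℕ → Matrix (Fin m) (Fin d) ℝ)
    (hXit : ∀ k, X k = prox (Z k))
    (hZit : ∀ k, Z (k + 1) = A * X k - γ • (B * gradMat gradf (X k)) - Y k)
    (hYit : ∀ k, Y (k + 1) = Y k + C * Z (k + 1))
    (hY0 : Y 0 = 0)
    -- the transformed sequence Ũ^k = (Z̃^k, W̃^k)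
    (Zt Wt : ℕ → Matrix (Fin m) (Fin d) ℝ)
    (hZt1 : Zt 1 = D * X 0 - γ • gradMat gradf (X 0))
    (hWt1 : Wt 1 = psdSqrt hC * Zt 1)
    (hrec : ∀ k, 1 ≤ k →
      Zt (k + 1) = (D * prox (B * Zt k) - γ • gradMat gradf (prox (B * Zt k)))
          - psdSqrt hC * Wt k ∧
      Wt (k + 1) = psdSqrt hC * (D * prox (B * Zt k) - γ • gradMat gradf (prox (B * Zt k)))
          + (1 - C) * Wt k) :
    ∀ k, 1 ≤ k → Z k = B * Zt k ∧ Y k = B * (psdSqrt hC * Wt k) :=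
  stmt_15_general γ gradf A B C D hC hBC hABD prox X Z Y hXit hZit hYit hY0 Zt Wt hZt1 hWt1 hrec
end
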